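/- Let X be a real normed linear space, x₁,…,xₙ nonzero vectors, pⱼ ≥ 0 with Σpⱼ = 1, and x̄ := Σⱼ pⱼ•xⱼ ≠ 0. If there exists R with 0 < R < 1 such that ⟨xⱼ, x̄⟩_s ≤ R·‖xⱼ‖·‖x̄‖ for each j, then R·Σⱼ pⱼ‖xⱼ‖ ≥ ‖Σⱼ pⱼ•xⱼ‖. -/

import Mathlib

/-! Write `a = ∑ pⱼ • xⱼ` and let `D x` be the right derivative at `0` of the convex function
`t ↦ ‖a + t • x‖`. Each quotient defining `⟨x, a⟩_s` dominates `‖a‖` times the slope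
`(‖a + t • x‖ - ‖a‖) / t`, so `‖a‖ * D x ≤ ⟨x, a⟩_s`. The triangle inequality for
`(1 + t) • a = ∑ pⱼ • (a + t • xⱼ)` gives `‖a‖ ≤ ∑ pⱼ * D xⱼ` in the limit `t → 0⁺`. Hence
`‖a‖ ^ 2 ≤ ∑ pⱼ * ⟨xⱼ, a⟩_s ≤ R * ‖a‖ * ∑ pⱼ * ‖xⱼ‖`. -/

noncomputable def innerSup {X : Type*} [NormedAddCommGroup X] [NormedSpace ℝ X] (x a : X) : ℝ :=
  sInf ((fun t : ℝ => (‖a + t • x‖ ^ 2 - ‖a‖ ^ 2) / (2 * t)) '' Set.Ioi 0)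

open Filter Topology Set

section NormSlope

variable {X : Type*} [NormedAddCommGroup X] [NormedSpace ℝ X]

theorem convexOn_norm_add_smul (a x : X) : ConvexOn ℝ univ fun t : ℝ => ‖a + t • x‖ := by
  simpa [Function.comp_def, AffineMap.lineMap_apply_module', add_comm] using
    (convexOn_norm convex_univ).comp_affineMap (AffineMap.lineMap a (a + x) : ℝ →ᵃ[ℝ] X)

theorem monotoneOn_norm_add_smul_slope (a x : X) :
    MonotoneOn (fun t : ℝ => (‖a + t • x‖ - ‖a‖) / t) (Ioi 0) := by
  intro s hs t ht hst
  simpa using (convexOn_norm_add_smul a x).secant_mono (a := 0) (mem_univ _) (mem_univ s)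
    (mem_univ t) (ne_of_gt hs) (ne_of_gt ht) hst

theorem neg_norm_le_norm_add_smul_slope (a x : X) {t : ℝ} (ht : 0 < t) :
    -‖x‖ ≤ (‖a + t • x‖ - ‖a‖) / t := by
  rw [le_div_iff₀ ht]
  have := norm_sub_norm_le a (a + t • x)
  rw [sub_add_cancel_left, norm_neg, norm_smul, Real.norm_of_nonneg ht.le] at this
  linarith

/-- The right derivative at `0` of `t ↦ ‖a + t • x‖`; the infimum is the limit by convexity. -/
noncomputable def normRightDeriv (a x : X) : ℝ :=
  sInf ((fun t : ℝ => (‖a + t • x‖ - ‖a‖) / t) '' Ioi 0)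

theorem bddBelow_norm_add_smul_slope (a x : X) :
    BddBelow ((fun t : ℝ => (‖a + t • x‖ - ‖a‖) / t) '' Ioi 0) :=
  ⟨-‖x‖, forall_mem_image.2 fun _ ht => neg_norm_le_norm_add_smul_slope a x ht⟩

theorem tendsto_normRightDeriv (a x : X) :
    Tendsto (fun t : ℝ => (‖a + t • x‖ - ‖a‖) / t) (𝓝[>] 0) (𝓝 (normRightDeriv a x)) :=
  (monotoneOn_norm_add_smul_slope a x).tendsto_nhdsGT (bddBelow_norm_add_smul_slope a x)

theorem norm_mul_normRightDeriv_le_innerSup (a x : X) :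
    ‖a‖ * normRightDeriv a x ≤ innerSup x a := by
  refine le_csInf (nonempty_Ioi.image _) (forall_mem_image.2 fun t ht => ?_)
  have ht : (0 : ℝ) < t := ht
  have hslope : normRightDeriv a x ≤ (‖a + t • x‖ - ‖a‖) / t :=
    csInf_le (bddBelow_norm_add_smul_slope a x) (mem_image_of_mem _ ht)
  -- the difference of the two quotients is `(‖a + t • x‖ - ‖a‖) ^ 2 / (2 * t) ≥ 0`
  calc ‖a‖ * normRightDeriv a x ≤ ‖a‖ * ((‖a + t • x‖ - ‖a‖) / t) :=
        mul_le_mul_of_nonneg_left hslope (norm_nonneg a)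
    _ ≤ (‖a + t • x‖ ^ 2 - ‖a‖ ^ 2) / (2 * t) := by
        rw [← mul_div_assoc, div_le_div_iff₀ ht (by positivity)]
        nlinarith [mul_nonneg (sq_nonneg (‖a + t • x‖ - ‖a‖)) ht.le]

theorem norm_le_sum_mul_norm_add_smul_slope {ι : Type*} (s : Finset ι) (p : ι → ℝ) (x : ι → X)
    (hp : ∀ j ∈ s, 0 ≤ p j) (hp1 : ∑ j ∈ s, p j = 1) {t : ℝ} (ht : 0 < t) :
    ‖∑ j ∈ s, p j • x j‖ ≤
      ∑ j ∈ s, p j * ((‖∑ i ∈ s, p i • x i + t • x j‖ - ‖∑ i ∈ s, p i • x i‖) / t) := by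
  set a := ∑ i ∈ s, p i • x i
  have hcomb : ∑ j ∈ s, p j • (a + t • x j) = (1 + t) • a := by
    simp only [smul_add, Finset.sum_add_distrib, ← Finset.sum_smul, hp1, smul_comm (p _) t,
      ← Finset.smul_sum, add_smul, one_smul]
    rfl
  have htri : (1 + t) * ‖a‖ ≤ ∑ j ∈ s, p j * ‖a + t • x j‖ := by
    calc (1 + t) * ‖a‖ = ‖∑ j ∈ s, p j • (a + t • x j)‖ := by
          rw [hcomb, norm_smul, Real.norm_of_nonneg (by positivity)]
      _ ≤ ∑ j ∈ s, ‖p j • (a + t • x j)‖ := norm_sum_le _ _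
      _ = ∑ j ∈ s, p j * ‖a + t • x j‖ :=
          Finset.sum_congr rfl fun j hj => by rw [norm_smul, Real.norm_of_nonneg (hp j hj)]
  simp only [mul_div_assoc', ← Finset.sum_div, mul_sub, Finset.sum_sub_distrib, ← Finset.sum_mul,
    hp1, one_mul]
  rw [le_div_iff₀ ht]
  linarith

theorem norm_le_sum_mul_normRightDeriv {ι : Type*} (s : Finset ι) (p : ι → ℝ) (x : ι → X)
    (hp : ∀ j ∈ s, 0 ≤ p j) (hp1 : ∑ j ∈ s, p j = 1) :
    ‖∑ j ∈ s, p j • x j‖ ≤ ∑ j ∈ s, p j * normRightDeriv (∑ i ∈ s, p i • x i) (x j) :=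
  ge_of_tendsto (tendsto_finsetSum s fun j _ => (tendsto_normRightDeriv _ (x j)).const_mul (p j))
    (eventually_nhdsWithin_of_forall fun _ ht =>
      norm_le_sum_mul_norm_add_smul_slope s p x hp hp1 ht)

end NormSlope

theorem stmt19_general {X : Type*} [NormedAddCommGroup X] [NormedSpace ℝ X]
    (n : ℕ) (x : Fin n → X)
    (p : Fin n → ℝ) (hp : ∀ j, 0 ≤ p j) (hp1 : ∑ j, p j = 1)
    (hbar : (∑ j, p j • x j) ≠ 0)
    (R : ℝ)
    (h : ∀ j, innerSup (x j) (∑ i, p i • x i) ≤ R * ‖x j‖ * ‖∑ i, p i • x i‖) :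
    R * ∑ j, p j * ‖x j‖ ≥ ‖∑ j, p j • x j‖ := by
  set a := ∑ j, p j • x j
  have ha : 0 < ‖a‖ := norm_pos_iff.2 hbar
  have key : ‖a‖ * ‖a‖ ≤ (R * ∑ j, p j * ‖x j‖) * ‖a‖ :=
    calc ‖a‖ * ‖a‖ ≤ ‖a‖ * ∑ j, p j * normRightDeriv a (x j) :=
          mul_le_mul_of_nonneg_left
            (norm_le_sum_mul_normRightDeriv _ p x (fun j _ => hp j) hp1) ha.le
      _ = ∑ j, p j * (‖a‖ * normRightDeriv a (x j)) := by
          rw [Finset.mul_sum]; exact Finset.sum_congr rfl fun j _ => by ring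
      _ ≤ ∑ j, p j * (R * ‖x j‖ * ‖a‖) := Finset.sum_le_sum fun j _ =>
          mul_le_mul_of_nonneg_left
            ((norm_mul_normRightDeriv_le_innerSup a (x j)).trans (h j)) (hp j)
      _ = (R * ∑ j, p j * ‖x j‖) * ‖a‖ := by
          rw [Finset.mul_sum, Finset.sum_mul]; exact Finset.sum_congr rfl fun j _ => by ring
  exact le_of_mul_le_mul_right key ha

theorem stmt19 {X : Type*} [NormedAddCommGroup X] [NormedSpace ℝ X]
    (n : ℕ) (x : Fin n → X) (hx0 : ∀ j, x j ≠ 0)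
    (p : Fin n → ℝ) (hp : ∀ j, 0 ≤ p j) (hp1 : ∑ j, p j = 1)
    (hbar : (∑ j, p j • x j) ≠ 0)
    (R : ℝ) (hR0 : 0 < R) (hR1 : R < 1)
    (h : ∀ j, innerSup (x j) (∑ i, p i • x i) ≤ R * ‖x j‖ * ‖∑ i, p i • x i‖) :
    R * ∑ j, p j * ‖x j‖ ≥ ‖∑ j, p j • x j‖ :=
  stmt19_general n x p hp hp1 hbar R h
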